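/- Let (Ā, B̄) be the structural pair composed of r similar subsystems parametrized by (Ā', B̄', H̄, Ē), and suppose the condensed graph D(Ē) is spanned by disjoint cycles, i.e., there exists a permutation σ of {1,…,r} with Ē_{σ(i),i} = 1 for all i. If the system bipartite graph B(Ā' ∨ H̄, B̄') has a matching with no right-unmatched vertices, then the system bipartite graph B(Ā, B̄) has a matching with no right-unmatched vertices. -/

import Mathlib

open Matrix

/-- Controllability matrix `[B, AB, …, A^{n-1}B]` (columns indexed by `Fin (card X) × U`). -/
def ctrbMatrix {X U : Type*} [Fintype X] [DecidableEq X]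
    (A : Matrix X X ℝ) (B : Matrix X U ℝ) :
    Matrix X (Fin (Fintype.card X) × U) ℝ :=
  fun i kj => (A ^ (kj.1 : ℕ) * B) i kj.2

/-- A real pair `(A,B)` is controllable if its controllability matrix has full rank. -/
def Controllable {X U : Type*} [Fintype X] [DecidableEq X] [Fintype U]
    (A : Matrix X X ℝ) (B : Matrix X U ℝ) : Prop :=
  (ctrbMatrix A B).rank = Fintype.card X

/-- `M` has the same sparsity pattern as the Boolean matrix `Mb`. -/
def SameSparsity {X Y : Type*} (M : Matrix X Y ℝ) (Mb : Matrix X Y Bool) : Prop :=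
  ∀ i j, M i j = 0 ↔ Mb i j = false

/-- Structural controllability of a structural (Boolean) pair. -/
def StructurallyControllable {X U : Type*} [Fintype X] [DecidableEq X] [Fintype U]
    (Ab : Matrix X X Bool) (Bb : Matrix X U Bool) : Prop :=
  ∃ A : Matrix X X ℝ, ∃ B : Matrix X U ℝ,
    SameSparsity A Ab ∧ SameSparsity B Bb ∧ Controllable A B

/-- Edge relation of the system digraph `D(Ā,B̄)`. -/
def sysDigraphRel {X U : Type*} (Ab : Matrix X X Bool) (Bb : Matrix X U Bool) :
    (X ⊕ U) → (X ⊕ U) → Prop :=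
  fun v w => match v, w with
  | Sum.inl j, Sum.inl i => Ab i j = true
  | Sum.inr k, Sum.inl i => Bb i k = true
  | _, Sum.inr _ => False

/-- A state vertex is input-reachable if some input vertex has a directed path to it. -/
def InputReachable {X U : Type*} (Ab : Matrix X X Bool) (Bb : Matrix X U Bool) (x : X) : Prop :=
  ∃ u : U, Relation.ReflTransGen (sysDigraphRel Ab Bb) (Sum.inr u) (Sum.inl x)

/-- Edge relation of the system bipartite graph `B(Ā,B̄)` (left = states ⊕ inputs, right = states). -/
def sysBipEdge {X U : Type*} (Ab : Matrix X X Bool) (Bb : Matrix X U Bool) :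
    (X ⊕ U) → X → Prop :=
  fun v i => match v with
  | Sum.inl j => Ab i j = true
  | Sum.inr k => Bb i k = true

/-- Edge relation of the state bipartite graph `B(Ā)`. -/
def stateBipEdge {X : Type*} (Ab : Matrix X X Bool) : X → X → Prop :=
  fun j i => Ab i j = true

/-- A matching of a bipartite graph with edge relation `E`: a set of edges sharing no
left vertex and no right vertex. -/
def IsMatching {α β : Type*} (E : α → β → Prop) (M : Set (α × β)) : Prop :=
  (∀ e ∈ M, E e.1 e.2) ∧
  (∀ e ∈ M, ∀ f ∈ M, e.1 = f.1 → e = f) ∧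
  (∀ e ∈ M, ∀ f ∈ M, e.2 = f.2 → e = f)

/-- Right vertices belonging to no edge of `M`. -/
def rightUnmatched {α β : Type*} (M : Set (α × β)) : Set β :=
  {b | ∀ e ∈ M, e.2 ≠ b}

/-- Left vertices belonging to no edge of `M`. -/
def leftUnmatched {α β : Type*} (M : Set (α × β)) : Set α :=
  {a | ∀ e ∈ M, e.1 ≠ a}

/-- A maximum matching: a matching of the largest cardinality. -/
def IsMaxMatching {α β : Type*} (E : α → β → Prop) (M : Set (α × β)) : Prop :=
  IsMatching E M ∧ ∀ M' : Set (α × β), IsMatching E M' → M'.ncard ≤ M.ncard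

/-- `S` is a strongly connected component of the digraph with edge relation `R`. -/
def IsSCC {V : Type*} (R : V → V → Prop) (S : Set V) : Prop :=
  S.Nonempty ∧ (∀ u ∈ S, ∀ v ∈ S, Relation.ReflTransGen R u v) ∧
  ∀ w : V, (∀ u ∈ S, Relation.ReflTransGen R u w ∧ Relation.ReflTransGen R w u) → w ∈ S

/-- An SCC is non-top linked if it has no incoming edge from outside. -/
def NonTopLinked {V : Type*} (R : V → V → Prop) (S : Set V) : Prop :=
  ∀ u v : V, R u v → v ∈ S → u ∈ S

/-- Dynamics pattern `(I_r ⊗ Ā') ∨ (Ē ⊗ H̄)` of a system of `r` similar subsystems. -/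
def simA {n : ℕ} (r : ℕ) (A' H : Matrix (Fin n) (Fin n) Bool)
    (E : Matrix (Fin r) (Fin r) Bool) :
    Matrix (Fin r × Fin n) (Fin r × Fin n) Bool :=
  fun q q' => ((if q.1 = q'.1 then A' q.2 q'.2 else false) || (E q.1 q'.1 && H q.2 q'.2))

/-- Input pattern `I_r ⊗ B̄'` of a system of `r` similar subsystems. -/
def simB {n p : ℕ} (r : ℕ) (B' : Matrix (Fin n) (Fin p) Bool) :
    Matrix (Fin r × Fin n) (Fin r × Fin p) Bool :=
  fun q k => if q.1 = k.1 then B' q.2 k.2 else false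

/-- Entrywise OR of Boolean matrices. -/
def orMat {X Y : Type*} (M N : Matrix X Y Bool) : Matrix X Y Bool :=
  fun i j => M i j || N i j

/-- Dynamics pattern of an interconnected system: diagonal blocks `Ā_i`,
off-diagonal blocks `Ē_{i,j}`. -/
def interA {r : ℕ} {n : Fin r → ℕ}
    (A : ∀ i, Matrix (Fin (n i)) (Fin (n i)) Bool)
    (E : ∀ i j, Matrix (Fin (n i)) (Fin (n j)) Bool) :
    Matrix (Σ i, Fin (n i)) (Σ i, Fin (n i)) Bool :=
  fun q q' => if h : q'.1 = q.1 then A q.1 q.2 (h ▸ q'.2) else E q.1 q'.1 q.2 q'.2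

/-- Input pattern of an interconnected system: block diagonal with blocks `B̄_i`. -/
def interB {r : ℕ} {n p : Fin r → ℕ}
    (B : ∀ i, Matrix (Fin (n i)) (Fin (p i)) Bool) :
    Matrix (Σ i, Fin (n i)) (Σ i, Fin (p i)) Bool :=
  fun q k => if h : k.1 = q.1 then B q.1 q.2 (h ▸ k.2) else false

/-!
A matching of `B(Ā, B̄)` without right-unmatched vertices is the same as an injective choice,
for every state `x`, of a left neighbour of `x`. Take such a choice `f` for `B(Ā' ∨ H̄, B̄')`
and copy it into every subsystem `i`: an input or an `Ā'`-edge of `f` is used inside subsystem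
`i`, while an `H̄`-edge is taken from subsystem `σ⁻¹ i`, which feeds subsystem `i` because
`Ē_{i, σ⁻¹ i} = 1`. Since `σ⁻¹` is injective, so is the copied choice.
-/

section Matching

variable {α β : Type*} (E : α → β → Prop)

theorem exists_injective_of_isMatching {M : Set (α × β)} (hM : IsMatching E M)
    (hun : rightUnmatched M = ∅) :
    ∃ f : β → α, Function.Injective f ∧ ∀ b, E (f b) b := by
  obtain ⟨hedge, hleft, -⟩ := hM
  have hcover : ∀ b, ∃ e ∈ M, e.2 = b := fun b => by
    by_contra! h
    exact (hun ▸ (h : b ∈ rightUnmatched M) : b ∈ (∅ : Set β))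
  choose e he he2 using hcover
  refine ⟨fun b => (e b).1, fun b b' hbb' => ?_, fun b => ?_⟩
  · rw [← he2 b, ← he2 b', hleft _ (he b) _ (he b') hbb']
  · simpa only [he2 b] using hedge _ (he b)

theorem isMatching_range_of_injective {f : β → α} (hf : Function.Injective f)
    (hE : ∀ b, E (f b) b) :
    IsMatching E (Set.range fun b => (f b, b)) ∧
      rightUnmatched (Set.range fun b => (f b, b)) = ∅ := by
  refine ⟨⟨?_, ?_, ?_⟩, ?_⟩
  · rintro _ ⟨b, rfl⟩
    exact hE b
  · rintro _ ⟨b, rfl⟩ _ ⟨b', rfl⟩ h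
    rw [hf h]
  · rintro _ ⟨b, rfl⟩ _ ⟨b', rfl⟩ rfl
    rfl
  · exact Set.eq_empty_of_forall_notMem fun b hb => hb _ ⟨b, rfl⟩ rfl

theorem exists_isMatching_rightUnmatched_eq_empty_iff :
    (∃ M, IsMatching E M ∧ rightUnmatched M = ∅) ↔
      ∃ f : β → α, Function.Injective f ∧ ∀ b, E (f b) b := by
  constructor
  · rintro ⟨M, hM, hun⟩
    exact exists_injective_of_isMatching E hM hun
  · rintro ⟨f, hf, hE⟩
    exact ⟨_, isMatching_range_of_injective E hf hE⟩

end Matching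

section SimilarSystem

variable {n p r : ℕ} (A' : Matrix (Fin n) (Fin n) Bool)

def similarLift (τ : Fin r → Fin r) (f : Fin n → Fin n ⊕ Fin p) (q : Fin r × Fin n) :
    (Fin r × Fin n) ⊕ (Fin r × Fin p) :=
  Sum.elim (fun j => Sum.inl (if A' q.2 j then q.1 else τ q.1, j))
    (fun k => Sum.inr (q.1, k)) (f q.2)

theorem similarLift_injective {τ : Fin r → Fin r} (hτ : Function.Injective τ)
    {f : Fin n → Fin n ⊕ Fin p} (hf : Function.Injective f) :
    Function.Injective (similarLift A' τ f) := by
  rintro ⟨i, x⟩ ⟨i', x'⟩ h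
  rcases hj : f x with j | k <;> rcases hj' : f x' with j' | k' <;>
    simp only [similarLift, hj, hj', Sum.elim_inl, Sum.elim_inr, Sum.inl.injEq, Sum.inr.injEq,
      Prod.mk.injEq, reduceCtorEq] at h
  · obtain ⟨hi, rfl⟩ := h
    obtain rfl : x = x' := hf (hj.trans hj'.symm)
    cases hA : A' x j
    · simp only [hA, Bool.false_eq_true, if_false] at hi
      rw [hτ hi]
    · simpa [hA] using hi
  · obtain ⟨rfl, rfl⟩ := h
    rw [hf (hj.trans hj'.symm)]

theorem sysBipEdge_similarLift (H : Matrix (Fin n) (Fin n) Bool)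
    (B' : Matrix (Fin n) (Fin p) Bool) (E : Matrix (Fin r) (Fin r) Bool)
    {τ : Fin r → Fin r} (hτ : ∀ i, E i (τ i) = true) {f : Fin n → Fin n ⊕ Fin p}
    (hf : ∀ x, sysBipEdge (orMat A' H) B' (f x) x) (q : Fin r × Fin n) :
    sysBipEdge (simA r A' H E) (simB r B') (similarLift A' τ f q) q := by
  obtain ⟨i, x⟩ := q
  have hfx := hf x
  rcases hj : f x with j | k <;> rw [hj] at hfx <;>
    simp only [similarLift, hj, Sum.elim_inl, Sum.elim_inr, sysBipEdge, orMat] at hfx ⊢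
  · cases hA : A' x j
    · have hH : H x j = true := by simpa [hA] using hfx
      simp [simA, hA, hH, hτ i]
    · simp [simA, hA]
  · simpa [simB] using hfx

end SimilarSystem

theorem similar_system_matching_of_cycle_spanned
    {n p : ℕ} {r : ℕ}
    (A' H : Matrix (Fin n) (Fin n) Bool) (B' : Matrix (Fin n) (Fin p) Bool)
    (E : Matrix (Fin r) (Fin r) Bool)
    (hcyc : ∃ σ : Equiv.Perm (Fin r), ∀ i : Fin r, E (σ i) i = true)
    (hmatch : ∃ M : Set ((Fin n ⊕ Fin p) × Fin n),
      IsMatching (sysBipEdge (orMat A' H) B') M ∧ rightUnmatched M = ∅) :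
    ∃ M : Set (((Fin r × Fin n) ⊕ (Fin r × Fin p)) × (Fin r × Fin n)),
      IsMatching (sysBipEdge (simA r A' H E) (simB r B')) M ∧ rightUnmatched M = ∅ := by
  obtain ⟨σ, hσ⟩ := hcyc
  obtain ⟨f, hf, hfE⟩ := (exists_isMatching_rightUnmatched_eq_empty_iff _).1 hmatch
  have hσinv : ∀ i, E i (σ⁻¹ i) = true := fun i => by simpa using hσ (σ⁻¹ i)
  exact (exists_isMatching_rightUnmatched_eq_empty_iff _).2
    ⟨similarLift A' ⇑σ⁻¹ f, similarLift_injective A' σ⁻¹.injective hf,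
      sysBipEdge_similarLift A' H B' E hσinv hfE⟩
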